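/- arXiv:0710.4223 — 2 statements merged into one kernel-verified Lean document; each statement's English description precedes it below -/
import Mathlib

section
/- Let Λ₀, Λ₁ > 0 with 2·(1/Λ₀ + 1/Λ₁)⁻¹ = 1, and let c > 0, T > 0. For h > 0 dividing the interval, let T(h) be the traversal time of [0, cT] when the speed alternates between c·Λ₀ and c·Λ₁ on consecutive slabs of width h (the last, possibly partial, slab traversed at the appropriate speed). Then |T(h) − T| ≤ (h/c)·|1/Λ₀ − 1/Λ₁|, and in particular T(h) → T as h → 0⁺. -/
/-!
Write `a = 1/Λ₀`, `b = 1/Λ₁`, so `a + b = 2`, and let `N h + r = c T` with `0 ≤ r < h`.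
The `N` full slabs cost `(h/c)(N(a + b) + [N odd](a - b))/2`, and the partial slab costs
`r a / c` or `r b / c`. Since the average `(a + b)/2` is exactly `1`, everything cancels
against `T = (N h + r)/c` except a single half-slab discrepancy:
`c (T(h) - T) = (a - b)/2 · r` for `N` even and `(a - b)/2 · (h - r)` for `N` odd.
-/

/-- Traversal time of `[0, c*T]` when the speed alternates between `c*Λ₀` and `c*Λ₁`
on consecutive slabs of width `h`, the last (possibly partial) slab being traversed
at the appropriate speed. -/
noncomputable def travTime (c Λ₀ Λ₁ T h : ℝ) : ℝ :=
  ∑ k ∈ Finset.range ⌊c * T / h⌋₊, h / (c * (if Even k then Λ₀ else Λ₁)) +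
    (c * T - ⌊c * T / h⌋₊ * h) / (c * (if Even ⌊c * T / h⌋₊ then Λ₀ else Λ₁))

open Filter Topology Finset

theorem two_mul_sum_range_ite_even {R : Type*} [CommRing R] (a b : R) (N : ℕ) :
    2 * ∑ k ∈ range N, (if Even k then a else b) =
      N * (a + b) + if Even N then 0 else a - b := by
  induction N with
  | zero => simp
  | succ N ih =>
    rw [sum_range_succ, mul_add, ih]
    by_cases hN : Even N
    · simp only [hN, Nat.even_add_one, not_true, if_true, if_false]
      push_cast
      ring
    · simp only [hN, Nat.even_add_one, not_false_eq_true, if_true, if_false]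
      push_cast
      ring

theorem div_mul_ite_eq_div_mul_one_div {K : Type*} [Field K] (x c Λ₀ Λ₁ : K) (p : Prop) [Decidable p] :
    x / (c * if p then Λ₀ else Λ₁) = x / c * if p then 1 / Λ₀ else 1 / Λ₁ := by
  split_ifs <;> rw [div_mul_eq_div_div, div_eq_mul_one_div]

theorem sum_slab_time_sub_eq (c Λ₀ Λ₁ L h : ℝ) (N : ℕ) (hab : 1 / Λ₀ + 1 / Λ₁ = 2) :
    ∑ k ∈ range N, h / (c * if Even k then Λ₀ else Λ₁) +
        (L - N * h) / (c * if Even N then Λ₀ else Λ₁) - L / c =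
      (1 / Λ₀ - 1 / Λ₁) / (2 * c) * (if Even N then L - N * h else h - (L - N * h)) := by
  simp_rw [div_mul_ite_eq_div_mul_one_div, ← mul_sum]
  have hsum := two_mul_sum_range_ite_even (1 / Λ₀) (1 / Λ₁) N
  by_cases hN : Even N
  · simp only [hN, if_true] at hsum ⊢
    linear_combination (h / (2 * c)) * hsum + (L / (2 * c)) * hab
  · simp only [hN, if_false] at hsum ⊢
    linear_combination (h / (2 * c)) * hsum + (L / (2 * c)) * hab

theorem sub_floor_div_mul_mem_Ico {K : Type*} [Field K] [LinearOrder K] [IsStrictOrderedRing K]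
    [FloorSemiring K] {L h : K} (hL : 0 ≤ L) (hh : 0 < h) :
    L - ⌊L / h⌋₊ * h ∈ Set.Ico 0 h := by
  have hle : (⌊L / h⌋₊ : K) ≤ L / h := Nat.floor_le (div_nonneg hL hh.le)
  have hlt : L / h < ⌊L / h⌋₊ + 1 := Nat.lt_floor_add_one _
  rw [le_div_iff₀ hh] at hle
  rw [div_lt_iff₀ hh] at hlt
  constructor <;> linarith

theorem abs_ite_le_of_mem_Icc {α : Type*} [AddCommGroup α] [LinearOrder α]
    [IsOrderedAddMonoid α] {r h : α} (hr : r ∈ Set.Icc 0 h) (p : Prop) [Decidable p] :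
    |if p then r else h - r| ≤ h := by
  obtain ⟨hr0, hrh⟩ := hr
  split_ifs
  · rwa [abs_of_nonneg hr0]
  · rw [abs_of_nonneg (sub_nonneg.2 hrh)]
    exact sub_le_self h hr0

theorem abs_travTime_sub_le {c Λ₀ Λ₁ T h : ℝ} (hc : 0 < c) (hT : 0 ≤ T) (hh : 0 < h)
    (hab : 1 / Λ₀ + 1 / Λ₁ = 2) :
    |travTime c Λ₀ Λ₁ T h - T| ≤ h / (2 * c) * |1 / Λ₀ - 1 / Λ₁| := by
  set N := ⌊c * T / h⌋₊ with hN
  have hr : c * T - N * h ∈ Set.Ico 0 h := sub_floor_div_mul_mem_Ico (by positivity) hh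
  have key := sum_slab_time_sub_eq c Λ₀ Λ₁ (c * T) h N hab
  rw [mul_div_cancel_left₀ T hc.ne'] at key
  rw [travTime, ← hN, key, abs_mul, abs_div, abs_of_pos (by positivity : 0 < 2 * c)]
  calc |1 / Λ₀ - 1 / Λ₁| / (2 * c) * |if Even N then c * T - N * h else h - (c * T - N * h)|
      ≤ |1 / Λ₀ - 1 / Λ₁| / (2 * c) * h :=
        mul_le_mul_of_nonneg_left (abs_ite_le_of_mem_Icc (Set.Ico_subset_Icc_self hr) _)
          (by positivity)
    _ = h / (2 * c) * |1 / Λ₀ - 1 / Λ₁| := by ring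

theorem tendsto_nhdsGT_of_abs_sub_le {f : ℝ → ℝ} {L K : ℝ}
    (hf : ∀ h, 0 < h → |f h - L| ≤ h * K) : Tendsto f (𝓝[>] 0) (𝓝 L) := by
  rw [tendsto_iff_norm_sub_tendsto_zero]
  refine squeeze_zero_norm' ?_ (a := fun h => h * K) ?_
  · filter_upwards [self_mem_nhdsWithin] with h hh
    simpa only [norm_norm, Real.norm_eq_abs, abs_abs] using hf h hh
  · exact ((continuous_mul_const K).tendsto' 0 0 (zero_mul K)).mono_left nhdsWithin_le_nhds

theorem stmt_6_general (c Λ₀ Λ₁ T : ℝ) (hc : 0 < c) (hT : 0 < T)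
    (hhm : 2 * (1 / Λ₀ + 1 / Λ₁)⁻¹ = 1) :
    (∀ h : ℝ, 0 < h → |travTime c Λ₀ Λ₁ T h - T| ≤ (h / c) * |1 / Λ₀ - 1 / Λ₁|) ∧
    Filter.Tendsto (fun h => travTime c Λ₀ Λ₁ T h) (nhdsWithin 0 (Set.Ioi 0)) (nhds T) := by
  have hab : 1 / Λ₀ + 1 / Λ₁ = 2 := (inv_inj.mp (inv_eq_of_mul_eq_one_right hhm)).symm
  have hbound (h : ℝ) (hh : 0 < h) :
      |travTime c Λ₀ Λ₁ T h - T| ≤ (h / c) * |1 / Λ₀ - 1 / Λ₁| := by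
    refine (abs_travTime_sub_le hc hT.le hh hab).trans ?_
    gcongr
    linarith
  refine ⟨hbound, tendsto_nhdsGT_of_abs_sub_le (K := |1 / Λ₀ - 1 / Λ₁| / c) fun h hh => ?_⟩
  simpa only [mul_div_assoc', div_mul_eq_mul_div] using hbound h hh

theorem stmt_6 (c Λ₀ Λ₁ T : ℝ) (hc : 0 < c) (h0 : 0 < Λ₀) (h1 : 0 < Λ₁) (hT : 0 < T)
    (hhm : 2 * (1 / Λ₀ + 1 / Λ₁)⁻¹ = 1) :
    (∀ h : ℝ, 0 < h → |travTime c Λ₀ Λ₁ T h - T| ≤ (h / c) * |1 / Λ₀ - 1 / Λ₁|) ∧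
    Filter.Tendsto (fun h => travTime c Λ₀ Λ₁ T h) (nhdsWithin 0 (Set.Ioi 0)) (nhds T) :=
  stmt_6_general c Λ₀ Λ₁ T hc hT hhm
end

section
/- Let x : ℝ → ℝⁿ solve x' = f(x) and be periodic with minimal period T > 0. Let λ : ℝⁿ → ℝ be continuous with 0 < l ≤ λ on the image of x, and let τ solve τ' = λ(x(τ)), τ(0) = 0. Then z = x ∘ τ is periodic, with period T' equal to the unique time satisfying τ(T') = T, and T' = ∫₀ᵀ 1/λ(x(s)) ds. -/
/-!
Put `F u = ∫₀ᵘ 1/g` with `g = λ ∘ x`, a continuous positive function. `F` is strictly increasing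
and `F ∘ τ` has derivative `(1/g(τ t)) · g(τ t) = 1`, so `F (τ t) = t`: `τ` is the inverse of `F`.
This gives `τ (F T) = T` and the uniqueness of that time. Since `g` is `T`-periodic,
`t ↦ τ (t + F T) - T` solves the same equation with the same initial value, hence equals `τ`,
i.e. `τ (t + F T) = τ t + T`, and `x ∘ τ` is `F T`-periodic.
-/

namespace TimeChange

variable {g : ℝ → ℝ}

theorem hasDerivAt_integral_one_div (hg : Continuous g) (hpos : ∀ s, 0 < g s) (u : ℝ) :
    HasDerivAt (fun u => ∫ s in (0:ℝ)..u, 1 / g s) (1 / g u) u :=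
  ((continuous_const.div hg fun s => (hpos s).ne').integral_hasStrictDerivAt 0 u).hasDerivAt

theorem strictMono_integral_one_div (hg : Continuous g) (hpos : ∀ s, 0 < g s) :
    StrictMono fun u => ∫ s in (0:ℝ)..u, 1 / g s :=
  strictMono_of_hasDerivAt_pos (hasDerivAt_integral_one_div hg hpos)
    fun u => one_div_pos.2 (hpos u)

variable {ρ : ℝ → ℝ}

theorem integral_one_div_apply_eq (hg : Continuous g) (hpos : ∀ s, 0 < g s)
    (hρ : ∀ t, HasDerivAt ρ (g (ρ t)) t) (hρ0 : ρ 0 = 0) (t : ℝ) :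
    ∫ s in (0:ℝ)..ρ t, 1 / g s = t := by
  have hderiv : ∀ t, HasDerivAt (fun t => (∫ s in (0:ℝ)..ρ t, 1 / g s) - t) 0 t := by
    intro t
    have h := ((hasDerivAt_integral_one_div hg hpos (ρ t)).comp t (hρ t)).sub (hasDerivAt_id t)
    rwa [one_div_mul_cancel (hpos (ρ t)).ne', sub_self] at h
  have hconst := is_const_of_deriv_eq_zero (fun t => (hderiv t).differentiableAt)
    (fun t => (hderiv t).deriv) t 0
  simp only [hρ0, intervalIntegral.integral_same, sub_zero] at hconst
  linarith

theorem apply_integral_one_div_eq (hg : Continuous g) (hpos : ∀ s, 0 < g s)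
    (hρ : ∀ t, HasDerivAt ρ (g (ρ t)) t) (hρ0 : ρ 0 = 0) (a : ℝ) :
    ρ (∫ s in (0:ℝ)..a, 1 / g s) = a :=
  (strictMono_integral_one_div hg hpos).injective (integral_one_div_apply_eq hg hpos hρ hρ0 _)

theorem eq_of_hasDerivAt (hg : Continuous g) (hpos : ∀ s, 0 < g s)
    (hρ : ∀ t, HasDerivAt ρ (g (ρ t)) t) (hρ0 : ρ 0 = 0)
    {σ : ℝ → ℝ} (hσ : ∀ t, HasDerivAt σ (g (σ t)) t) (hσ0 : σ 0 = 0) :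
    σ = ρ :=
  funext fun t => (strictMono_integral_one_div hg hpos).injective <| by
    rw [integral_one_div_apply_eq hg hpos hσ hσ0, integral_one_div_apply_eq hg hpos hρ hρ0]

theorem apply_add_integral_one_div (hg : Continuous g) (hpos : ∀ s, 0 < g s)
    (hρ : ∀ t, HasDerivAt ρ (g (ρ t)) t) (hρ0 : ρ 0 = 0)
    {T : ℝ} (hper : Function.Periodic g T) (t : ℝ) :
    ρ (t + ∫ s in (0:ℝ)..T, 1 / g s) = ρ t + T := by
  set T' := ∫ s in (0:ℝ)..T, 1 / g s
  have hshift : ∀ t, HasDerivAt (fun t => ρ (t + T') - T) (g (ρ (t + T') - T)) t := by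
    intro t
    have h := ((hρ (t + T')).comp_add_const t T').sub_const T
    rwa [← hper (ρ (t + T') - T), sub_add_cancel]
  have hshift0 : ρ (0 + T') - T = 0 := by
    rw [zero_add, apply_integral_one_div_eq hg hpos hρ hρ0, sub_self]
  have := congrFun (eq_of_hasDerivAt hg hpos hρ hρ0 hshift hshift0) t
  linarith

end TimeChange

open TimeChange

theorem stmt_8_general (n : ℕ) (f : (Fin n → ℝ) → (Fin n → ℝ)) (x : ℝ → (Fin n → ℝ))
    (hx : ∀ t, HasDerivAt x (f (x t)) t)
    (T : ℝ) (hper : Function.Periodic x T)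
    (lam : (Fin n → ℝ) → ℝ) (hlamc : Continuous lam)
    (l : ℝ) (hl : 0 < l) (hlb : ∀ p ∈ Set.range x, l ≤ lam p)
    (τ : ℝ → ℝ) (hτ : ∀ t, HasDerivAt τ (lam (x (τ t))) t) (hτ0 : τ 0 = 0) :
    τ (∫ s in (0:ℝ)..T, 1 / lam (x s)) = T ∧
    (∀ t, τ t = T → t = ∫ s in (0:ℝ)..T, 1 / lam (x s)) ∧
    Function.Periodic (fun t => x (τ t)) (∫ s in (0:ℝ)..T, 1 / lam (x s)) := by
  have hg : Continuous fun s => lam (x s) :=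
    hlamc.comp (continuous_iff_continuousAt.2 fun t => (hx t).continuousAt)
  have hpos : ∀ s, 0 < lam (x s) := fun s => hl.trans_le (hlb _ ⟨s, rfl⟩)
  refine ⟨apply_integral_one_div_eq hg hpos hτ hτ0 T, fun t ht => ?_, fun t => ?_⟩
  · rw [← ht]
    exact (integral_one_div_apply_eq hg hpos hτ hτ0 t).symm
  · simp only [apply_add_integral_one_div hg hpos hτ hτ0 (hper.comp lam) t, hper (τ t)]

theorem stmt_8 (n : ℕ) (f : (Fin n → ℝ) → (Fin n → ℝ)) (x : ℝ → (Fin n → ℝ))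
    (hx : ∀ t, HasDerivAt x (f (x t)) t)
    (T : ℝ) (hT : 0 < T) (hper : Function.Periodic x T)
    (hmin : ∀ T' : ℝ, 0 < T' → T' < T → ¬ Function.Periodic x T')
    (lam : (Fin n → ℝ) → ℝ) (hlamc : Continuous lam)
    (l : ℝ) (hl : 0 < l) (hlb : ∀ p ∈ Set.range x, l ≤ lam p)
    (τ : ℝ → ℝ) (hτ : ∀ t, HasDerivAt τ (lam (x (τ t))) t) (hτ0 : τ 0 = 0) :
    τ (∫ s in (0:ℝ)..T, 1 / lam (x s)) = T ∧
    (∀ t, τ t = T → t = ∫ s in (0:ℝ)..T, 1 / lam (x s)) ∧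
    Function.Periodic (fun t => x (τ t)) (∫ s in (0:ℝ)..T, 1 / lam (x s)) :=
  stmt_8_general n f x hx T hper lam hlamc l hl hlb τ hτ hτ0
end
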